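/- Let T_1 = (M, E_1) and T_2 = (M, E_2) be two clique trees of a chordal claw-free graph G = (V,E). Then for every vertex v ∈ V, the induced subgraphs T_1[M_v] and T_2[M_v] are equal, i.e., they have exactly the same edges. -/

import Mathlib

open SimpleGraph

/-- A graph is *chordal* if every cycle of length at least 4 has a chord, i.e. an
edge of the graph joining two vertices of the cycle that is not an edge of the cycle. -/
def IsChordal {V : Type*} (G : SimpleGraph V) : Prop :=
  ∀ (v : V) (c : G.Walk v v), c.IsCycle → 4 ≤ c.length →
    ∃ u w : V, u ∈ c.support ∧ w ∈ c.support ∧ G.Adj u w ∧ s(u, w) ∉ c.edges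

/-- A graph is *claw-free* if it has no induced subgraph isomorphic to the
complete bipartite graph `K_{1,3}`. -/
def ClawFree {V : Type*} (G : SimpleGraph V) : Prop :=
  IsEmpty (completeBipartiteGraph (Fin 1) (Fin 3) ↪g G)

/-- A *max clique* of `G` is a maximal clique. -/
def IsMaximalClique {V : Type*} (G : SimpleGraph V) (s : Set V) : Prop :=
  G.IsClique s ∧ ∀ t : Set V, G.IsClique t → s ⊆ t → s = t

/-- The type of max cliques of `G`. -/
abbrev MaxClique {V : Type*} (G : SimpleGraph V) : Type _ :=
  {s : Set V // IsMaximalClique G s}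

/-- `M_v`: the set of max cliques of `G` containing the vertex `v`. -/
def cliquesOf {V : Type*} (G : SimpleGraph V) (v : V) : Set (MaxClique G) :=
  {A | v ∈ A.1}

/-- A *clique tree* of `G`: a tree whose vertices are the max cliques of `G` such
that for every vertex `v` of `G` the subgraph induced by `M_v` is connected. -/
structure IsCliqueTree {V : Type*} (G : SimpleGraph V)
    (T : SimpleGraph (MaxClique G)) : Prop where
  isTree : T.IsTree
  induced_connected : ∀ v : V, (T.induce (cliquesOf G v)).Connected

/-- The subgraph of `T` induced by `S` is a path in `T`: there is a path of `T`
whose vertices are exactly `S` and whose edges are exactly the edges of `T`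
between vertices of `S`. -/
def InducedPath {M : Type*} (T : SimpleGraph M) (S : Set M) : Prop :=
  ∃ (a b : M) (p : T.Walk a b), p.IsPath ∧ (∀ A, A ∈ p.support ↔ A ∈ S) ∧
    ∀ A B, A ∈ S → B ∈ S → (T.Adj A B ↔ s(A, B) ∈ p.edges)

/-- `B` is a *star clique*: every vertex of `B` is contained in at most one
neighbor of `B` in the clique tree `T`. -/
def IsStarClique {V : Type*} (G : SimpleGraph V) (T : SimpleGraph (MaxClique G))
    (B : MaxClique G) : Prop :=
  ∀ v ∈ B.1, ∀ A A' : MaxClique G, T.Adj B A → T.Adj B A' →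
    v ∈ A.1 → v ∈ A'.1 → A = A'

/-- `B` is a *fork clique*: `B` has degree 3 in the clique tree `T`, for every
vertex `v ∈ B` there are two distinct neighbors `A, A'` of `B` with
`M_v = {B, A, A'}`, and for all distinct neighbors `A, A'` of `B` there is a
vertex `v` with `M_v = {B, A, A'}`. -/
def IsForkClique {V : Type*} (G : SimpleGraph V) (T : SimpleGraph (MaxClique G))
    (B : MaxClique G) : Prop :=
  (T.neighborSet B).ncard = 3 ∧
  (∀ v ∈ B.1, ∃ A A' : MaxClique G, A ≠ A' ∧ T.Adj B A ∧ T.Adj B A' ∧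
      cliquesOf G v = {B, A, A'}) ∧
  ∀ A A' : MaxClique G, T.Adj B A → T.Adj B A' → A ≠ A' →
      ∃ v : V, cliquesOf G v = {B, A, A'}

/-- The paths `T[S₁]` and `T[S₂]` *fork in `A`*: there is a fork
`(A', A, {A_P, A_Q})`, i.e. `A', A, A_P` are consecutive vertices of the path
`T[S₁]`, `A', A, A_Q` are consecutive vertices of the path `T[S₂]`,
`A_P` does not occur in `T[S₂]` and `A_Q` does not occur in `T[S₁]`. -/
def ForkAt {M : Type*} (T : SimpleGraph M) (S₁ S₂ : Set M) (A : M) : Prop :=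
  ∃ A' AP AQ : M, A' ∈ S₁ ∧ A' ∈ S₂ ∧ A ∈ S₁ ∧ A ∈ S₂ ∧ AP ∈ S₁ ∧ AQ ∈ S₂ ∧
    T.Adj A' A ∧ T.Adj A AP ∧ T.Adj A AQ ∧ A' ≠ AP ∧ A' ≠ AQ ∧ AP ∉ S₂ ∧ AQ ∉ S₁

/-- `A₁, A₂, A₃` form a *fork triangle* around `B`. -/
def FormsForkTriangle {V : Type*} (G : SimpleGraph V) (T : SimpleGraph (MaxClique G))
    (A₁ A₂ A₃ B : MaxClique G) : Prop :=
  A₁ ≠ A₂ ∧ A₁ ≠ A₃ ∧ A₂ ≠ A₃ ∧ T.Adj B A₁ ∧ T.Adj B A₂ ∧ T.Adj B A₃ ∧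
  (∃ u : V, cliquesOf G u = {A₁, B, A₂}) ∧
  (∃ v : V, cliquesOf G v = {A₂, B, A₃}) ∧
  (∃ w : V, cliquesOf G w = {A₃, B, A₁})

/-- `B` has a fork triangle. -/
def HasForkTriangle {V : Type*} (G : SimpleGraph V) (T : SimpleGraph (MaxClique G))
    (B : MaxClique G) : Prop :=
  ∃ A₁ A₂ A₃ : MaxClique G, FormsForkTriangle G T A₁ A₂ A₃ B

/-- In the tree `T` rooted at `R`, `B` is an ancestor of `A` (equivalently, `A` is
a descendant of `B`): `B` lies on the unique path from `R` to `A`.  Every vertex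
is an ancestor/descendant of itself. -/
def IsAncestor {M : Type*} (T : SimpleGraph M) (R A B : M) : Prop :=
  ∀ p : T.Walk R A, p.IsPath → B ∈ p.support

/-- In the tree `T` rooted at `R`, `A` is a child of `P`. -/
def IsChildOf {M : Type*} (T : SimpleGraph M) (R A P : M) : Prop :=
  T.Adj P A ∧ IsAncestor T R A P

/-- `R` is a leaf of `T`: it has exactly one neighbor. -/
def IsLeaf {M : Type*} (T : SimpleGraph M) (R : M) : Prop :=
  (T.neighborSet R).ncard = 1

/-- The triple `(v₁, v₂, v₃)` *spans* the max clique `A`: `A` is the only max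
clique of `G` containing `v₁`, `v₂` and `v₃`. -/
def Spans {V : Type*} (G : SimpleGraph V) (v₁ v₂ v₃ : V) (A : Set V) : Prop :=
  IsMaximalClique G A ∧ v₁ ∈ A ∧ v₂ ∈ A ∧ v₃ ∈ A ∧
    ∀ B : Set V, IsMaximalClique G B → v₁ ∈ B → v₂ ∈ B → v₃ ∈ B → B = A

/-!
Let `A` and `B` share a vertex `v` and be adjacent in the clique tree `T₁`. If they were not
adjacent in `T₂`, the `T₂`-path from `A` to `B` would pass through a third max clique `C`, and
`C ⊇ A ∩ B` by the clique-tree property of `T₂`. Claw-freeness rules this out: say `B` lies on the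
`T₁`-path from `A` to `C`, and pick `a ∈ A \ C`, `c ∈ C \ B` and `b ∈ B` not adjacent to `c`.
The `T₁`-path from `A` to a max clique `D ∋ a` avoids `B`, as `a ∉ B`; hence `b ∈ D` would force
`b ∈ A`, and `c ∈ D` would put `B` on the path from `D` to `C`, forcing `c ∈ B`. So `a, b, c` are
pairwise non-adjacent, while `v ∈ A ∩ B ⊆ C` is adjacent to all three: a claw.
-/

section MaxClique

variable {V : Type*} {G : SimpleGraph V}

lemma IsMaximalClique.exists_not_adj {B : Set V} (hB : IsMaximalClique G B) {c : V}
    (hc : c ∉ B) : ∃ b ∈ B, ¬G.Adj b c := by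
  by_contra! h
  have hcl : G.IsClique (insert c B) := hB.1.insert fun b hb _ => (h b hb).symm
  exact hc (hB.2 _ hcl (Set.subset_insert c B) ▸ Set.mem_insert c B)

lemma SimpleGraph.IsClique.exists_maxClique_superset {s : Set V} (hs : G.IsClique s) :
    ∃ D : MaxClique G, s ⊆ D.1 := by
  obtain ⟨D, hsD, hD⟩ := zorn_subset_nonempty {t : Set V | G.IsClique t}
    (fun c hc hchain _ => ⟨⋃₀ c, (isClique_sUnion hchain.directedOn).2 hc,
      fun _ => Set.subset_sUnion_of_mem⟩) s hs
  exact ⟨⟨D, hD.1, fun t ht hDt => hDt.antisymm (hD.le_of_ge ht hDt)⟩, hsD⟩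

lemma exists_maxClique_of_adj {a b : V} (h : G.Adj a b) :
    ∃ D : MaxClique G, a ∈ D.1 ∧ b ∈ D.1 := by
  obtain ⟨D, hD⟩ := (isClique_pair.2 fun _ => h).exists_maxClique_superset
  exact ⟨D, hD (Set.mem_insert a {b}), hD (Set.mem_insert_of_mem a rfl)⟩

lemma MaxClique.exists_mem_notMem {A B : MaxClique G} (h : A ≠ B) : ∃ x ∈ A.1, x ∉ B.1 :=
  Set.not_subset.1 fun hAB => h (Subtype.ext (A.2.2 B.1 B.2.1 hAB))

end MaxClique

lemma ClawFree.false_of_claw {V : Type*} {G : SimpleGraph V} (hcf : ClawFree G) {v a b c : V}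
    (hva : G.Adj v a) (hvb : G.Adj v b) (hvc : G.Adj v c)
    (hab : ¬G.Adj a b) (hac : ¬G.Adj a c) (hbc : ¬G.Adj b c)
    (hab' : a ≠ b) (hac' : a ≠ c) (hbc' : b ≠ c) : False := by
  let f : Fin 1 ⊕ Fin 3 → V := Sum.elim (fun _ => v) ![a, b, c]
  have hinj : f.Injective := by
    rintro (x | x) (y | y) h <;> fin_cases x <;> fin_cases y <;>
      simp_all [f, hva.ne, hvb.ne, hvc.ne, hva.ne.symm, hvb.ne.symm, hvc.ne.symm]
  have hadj : ∀ x y, G.Adj (f x) (f y) ↔ (completeBipartiteGraph (Fin 1) (Fin 3)).Adj x y := by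
    rintro (x | x) (y | y) <;> fin_cases x <;> fin_cases y <;>
      simp [f, hva, hvb, hvc, hva.symm, hvb.symm, hvc.symm, hab, hac, hbc,
        G.adj_comm b a, G.adj_comm c a, G.adj_comm c b]
  exact hcf.false ⟨⟨f, hinj⟩, hadj _ _⟩

lemma SimpleGraph.IsAcyclic.support_subset_of_isPath {M : Type*} {T : SimpleGraph M}
    (hT : T.IsAcyclic) {x y : M} {p : T.Walk x y} (hp : p.IsPath) (q : T.Walk x y) :
    p.support ⊆ q.support := by
  classical
  have := hT.subsingleton_path x y
  have : p = q.bypass := congrArg Subtype.val (Subsingleton.elim ⟨p, hp⟩ ⟨_, q.bypass_isPath⟩)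
  exact this ▸ q.support_bypass_subset_support

section CliqueTree

variable {V : Type*} {G : SimpleGraph V} {T : SimpleGraph (MaxClique G)}

lemma IsCliqueTree.mem_of_mem_support (hT : IsCliqueTree G T) {X Y D : MaxClique G} {u : V}
    (hX : u ∈ X.1) (hY : u ∈ Y.1) {p : T.Walk X Y} (hp : p.IsPath) (hD : D ∈ p.support) :
    u ∈ D.1 := by
  obtain ⟨w⟩ := (hT.induced_connected u).preconnected ⟨X, hX⟩ ⟨Y, hY⟩
  have hw : D ∈ (w.map (Embedding.induce (cliquesOf G u)).toHom).support :=
    hT.isTree.isAcyclic.support_subset_of_isPath hp _ hD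
  rw [Walk.support_map] at hw
  obtain ⟨Z, -, rfl⟩ := List.mem_map.1 hw
  exact Z.2

lemma IsCliqueTree.inter_not_subset_of_mem_support (hT : IsCliqueTree G T) (hcf : ClawFree G)
    {A B C : MaxClique G} (hAB : T.Adj A B) (hCA : C ≠ A) (hCB : C ≠ B)
    {v : V} (hvA : v ∈ A.1) (hvB : v ∈ B.1)
    {pAC : T.Walk A C} (hpAC : pAC.IsPath) (hB : B ∈ pAC.support) : ¬A.1 ∩ B.1 ⊆ C.1 := by
  intro hsub
  obtain ⟨a, haA, haC⟩ := MaxClique.exists_mem_notMem hCA.symm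
  obtain ⟨c, hcC, hcB⟩ := MaxClique.exists_mem_notMem hCB
  obtain ⟨b, hbB, hbc⟩ := B.2.exists_not_adj hcB
  have haB : a ∉ B.1 := fun h => haC (hsub ⟨haA, h⟩)
  have hbc' : b ≠ c := fun h => hcB (h ▸ hbB)
  have hbA : b ∉ A.1 := fun h => hbc (C.2.1 (hsub ⟨h, hbB⟩) hcC hbc')
  have hB_notMem : ∀ {D : MaxClique G} (p : T.Walk A D), p.IsPath → a ∈ D.1 → B ∉ p.support :=
    fun p hp haD hBp => haB (hT.mem_of_mem_support haA haD hp hBp)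
  have hab : ¬G.Adj a b := by
    intro h
    obtain ⟨D, haD, hbD⟩ := exists_maxClique_of_adj h
    obtain ⟨p, hp, -⟩ := hT.isTree.existsUnique_path A D
    exact hbA <| hT.mem_of_mem_support hbB hbD (hp.cons (hB_notMem p hp haD) (h := hAB.symm))
      (by simp)
  have hac : ¬G.Adj a c := by
    intro h
    obtain ⟨D, haD, hcD⟩ := exists_maxClique_of_adj h
    obtain ⟨p, hp, -⟩ := hT.isTree.existsUnique_path A D
    obtain ⟨q, hq, -⟩ := hT.isTree.existsUnique_path D C
    have hBpq := hT.isTree.isAcyclic.support_subset_of_isPath hpAC (p.append q) hB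
    rcases (Walk.mem_support_append_iff p q).1 hBpq with hBp | hBq
    · exact hB_notMem p hp haD hBp
    · exact hcB (hT.mem_of_mem_support hcD hcC hq hBq)
  exact hcf.false_of_claw (A.2.1 hvA haA fun h => haB (h ▸ hvB))
    (B.2.1 hvB hbB fun h => hbA (h ▸ hvA)) (C.2.1 (hsub ⟨hvA, hvB⟩) hcC fun h => hcB (h ▸ hvB))
    hab hac hbc (fun h => hbA (h ▸ haA)) (fun h => haC (h ▸ hcC)) hbc'

lemma IsCliqueTree.inter_not_subset (hT : IsCliqueTree G T) (hcf : ClawFree G)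
    {A B C : MaxClique G} (hAB : T.Adj A B) (hCA : C ≠ A) (hCB : C ≠ B)
    {v : V} (hvA : v ∈ A.1) (hvB : v ∈ B.1) : ¬A.1 ∩ B.1 ⊆ C.1 := by
  obtain ⟨p, hp, -⟩ := hT.isTree.existsUnique_path A C
  by_cases hB : B ∈ p.support
  · exact hT.inter_not_subset_of_mem_support hcf hAB hCA hCB hvA hvB hp hB
  · rw [Set.inter_comm]
    exact hT.inter_not_subset_of_mem_support hcf hAB.symm hCB hCA hvB hvA
      (hp.cons hB (h := hAB.symm)) (by simp)

lemma IsCliqueTree.adj_of_adj {T' : SimpleGraph (MaxClique G)} (hT : IsCliqueTree G T)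
    (hT' : IsCliqueTree G T') (hcf : ClawFree G) {A B : MaxClique G} {v : V}
    (hvA : v ∈ A.1) (hvB : v ∈ B.1) (hAB : T.Adj A B) : T'.Adj A B := by
  obtain ⟨p, hp, -⟩ := hT'.isTree.existsUnique_path A B
  match p, hp with
  | .nil, _ => exact absurd rfl hAB.ne
  | .cons h .nil, _ => exact h
  | .cons (v := C) h (.cons h' q), hp =>
    obtain ⟨⟨-, hCq⟩, hAq⟩ := by simpa only [Walk.cons_isPath_iff] using hp
    have hCA : C ≠ A := fun e => hAq (e ▸ Walk.start_mem_support _)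
    have hCB : C ≠ B := fun e => hCq (e ▸ q.end_mem_support)
    refine absurd (fun u hu => ?_) (hT.inter_not_subset hcf hAB hCA hCB hvA hvB)
    exact hT'.mem_of_mem_support hu.1 hu.2 hp (by simp)

end CliqueTree

theorem induced_subgraphs_eq_general {V : Type*}
    (G : SimpleGraph V) (hcf : ClawFree G)
    (T₁ T₂ : SimpleGraph (MaxClique G))
    (hT₁ : IsCliqueTree G T₁) (hT₂ : IsCliqueTree G T₂) (v : V)
    (A B : MaxClique G) (hA : A ∈ cliquesOf G v) (hB : B ∈ cliquesOf G v) :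
    T₁.Adj A B ↔ T₂.Adj A B :=
  ⟨hT₁.adj_of_adj hT₂ hcf hA hB, hT₂.adj_of_adj hT₁ hcf hA hB⟩

/-- Let `T₁` and `T₂` be clique trees of a chordal claw-free
graph `G`.  Then for every vertex `v`, the induced subgraphs `T₁[M_v]` and
`T₂[M_v]` have exactly the same edges. -/
theorem induced_subgraphs_eq {V : Type*} [Fintype V] [Nonempty V]
    (G : SimpleGraph V) (hch : IsChordal G) (hcf : ClawFree G)
    (T₁ T₂ : SimpleGraph (MaxClique G))
    (hT₁ : IsCliqueTree G T₁) (hT₂ : IsCliqueTree G T₂) (v : V)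
    (A B : MaxClique G) (hA : A ∈ cliquesOf G v) (hB : B ∈ cliquesOf G v) :
    T₁.Adj A B ↔ T₂.Adj A B :=
  induced_subgraphs_eq_general G hcf T₁ T₂ hT₁ hT₂ v A B hA hB
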